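/- Let n, g be positive integers with 2g ≤ n and let p be an integer. Then p ≥ g if and only if there exist integers d_1, …, d_{n−1} and r_1, …, r_{n−1} such that Σᵢ d_i = p, Σᵢ r_i = 2g, and 4·d_i − r_i² ≥ 0 for every i. -/

import Mathlib

open Finset

-- `4d ≥ r² ≥ 2r - 1` gives `2d ≥ r - 1/2`, and integrality rounds this up to `2d ≥ r`
-- (over `ℚ`, `r = 1`, `d = 1/4` is a counterexample).
theorem Int.le_two_mul_of_sq_le_four_mul {r d : ℤ} (h : r ^ 2 ≤ 4 * d) : r ≤ 2 * d := by
  nlinarith [sq_nonneg (r - 1)]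

section

variable {ι : Type*} [Fintype ι]

theorem sum_le_two_mul_sum_of_sq_le_four_mul {d r : ι → ℤ} (h : ∀ i, r i ^ 2 ≤ 4 * d i) :
    ∑ i, r i ≤ 2 * ∑ i, d i := by
  rw [mul_sum]
  exact sum_le_sum fun i _ => Int.le_two_mul_of_sq_le_four_mul (h i)

/-- On a `g`-element set `s`, take `dᵢ = 1`, `rᵢ = 2` (so `4dᵢ = rᵢ²`), and put the excess
`p - g` into `d` at one further index. -/
theorem exists_sum_eq_of_le [DecidableEq ι] [Nonempty ι] {g : ℕ} (hg : g ≤ Fintype.card ι)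
    {p : ℤ} (hp : g ≤ p) :
    ∃ d r : ι → ℤ, ∑ i, d i = p ∧ ∑ i, r i = 2 * g ∧ ∀ i, r i ^ 2 ≤ 4 * d i := by
  obtain ⟨s, -, hs⟩ := exists_subset_card_eq (s := (univ : Finset ι)) hg
  obtain ⟨i₀⟩ := ‹Nonempty ι›
  refine ⟨fun i => (if i ∈ s then 1 else 0) + (if i = i₀ then p - g else 0),
    fun i => if i ∈ s then 2 else 0, ?_, ?_, fun i => ?_⟩
  · simp [sum_add_distrib, hs]
  · simp [sum_ite_mem, hs, mul_comm]
  · dsimp only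
    split_ifs <;> linarith

theorem le_iff_exists_sum_eq [Nonempty ι] {g : ℕ} (hg : g ≤ Fintype.card ι) (p : ℤ) :
    (g : ℤ) ≤ p ↔ ∃ d r : ι → ℤ, ∑ i, d i = p ∧ ∑ i, r i = 2 * g ∧ ∀ i, r i ^ 2 ≤ 4 * d i := by
  classical
  refine ⟨exists_sum_eq_of_le hg, ?_⟩
  rintro ⟨d, r, hd, hr, h⟩
  have := sum_le_two_mul_sum_of_sq_le_four_mul h
  rw [hd, hr] at this
  linarith

end

theorem osy_condition_iff_p_ge_g_general
    (n g : ℕ) (hg : 0 < g) (hgn : 2 * g ≤ n) (p : ℤ) :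
    (g : ℤ) ≤ p ↔
      ∃ d r : Fin (n - 1) → ℤ,
        (∑ i, d i = p) ∧ (∑ i, r i = 2 * (g : ℤ)) ∧
        ∀ i, 4 * d i - (r i) ^ 2 ≥ 0 := by
  have : Nonempty (Fin (n - 1)) := ⟨⟨0, by omega⟩⟩
  simp_rw [ge_iff_le, sub_nonneg]
  exact le_iff_exists_sum_eq (by rw [Fintype.card_fin]; omega) p

/-- **Arithmetic content of Proposition 5.2 (prop:equivalent).**  Let `n, g` be
positive integers with `2g ≤ n` and let `p` be an integer.  Then `p ≥ g` if and
only if there exist integers `d₁, …, d_{n−1}` and `r₁, …, r_{n−1}` such that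
`Σ dᵢ = p`, `Σ rᵢ = 2g`, and `4dᵢ − rᵢ² ≥ 0` for every `i`. -/
theorem osy_condition_iff_p_ge_g
    (n g : ℕ) (hn : 0 < n) (hg : 0 < g) (hgn : 2 * g ≤ n) (p : ℤ) :
    (g : ℤ) ≤ p ↔
      ∃ d r : Fin (n - 1) → ℤ,
        (∑ i, d i = p) ∧ (∑ i, r i = 2 * (g : ℤ)) ∧
        ∀ i, 4 * d i - (r i) ^ 2 ≥ 0 :=
  osy_condition_iff_p_ge_g_general n g hg hgn p
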